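/- The 5-dimensional nilpotent commutative associative algebra A₂₁ does not degenerate to A₂₀: the structure λ of A₂₀ does NOT lie in the closure of the GL(5,ℂ)-orbit O(μ) of the structure μ of A₂₁ (closure in the standard topology on the space of bilinear maps ℂ⁵ × ℂ⁵ → ℂ⁵). -/

import Mathlib

open ContinuousLinearMap

/-- The underlying space `ℂⁿ`. -/
abbrev Vn (n : ℕ) := Fin n → ℂ

/-- The space of bilinear maps `ℂⁿ × ℂⁿ → ℂⁿ` (as continuous linear maps in two
arguments), carrying its standard topology as a finite-dimensional complex vector space. -/
abbrev Bil (n : ℕ) := Vn n →L[ℂ] Vn n →L[ℂ] Vn n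

/-- The action of `GL(n, ℂ)` on bilinear maps: `(g · μ)(x, y) = g (μ (g⁻¹ x) (g⁻¹ y))`. -/
noncomputable def act {n : ℕ} (g : Vn n ≃L[ℂ] Vn n) (μ : Bil n) : Bil n :=
  ((compL ℂ (Vn n) (Vn n) (Vn n)).flip (g.symm : Vn n →L[ℂ] Vn n)).comp
    (((compL ℂ (Vn n) (Vn n) (Vn n)) (g : Vn n →L[ℂ] Vn n)).comp
      (μ.comp (g.symm : Vn n →L[ℂ] Vn n)))

@[simp] lemma act_apply {n : ℕ} (g : Vn n ≃L[ℂ] Vn n) (μ : Bil n) (x y : Vn n) :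
    act g μ x y = g (μ (g.symm x) (g.symm y)) := rfl

/-- The orbit `O(μ)` of a bilinear map under the `GL(n, ℂ)`-action. -/
noncomputable def orbit {n : ℕ} (μ : Bil n) : Set (Bil n) :=
  {ν | ∃ g : Vn n ≃L[ℂ] Vn n, ν = act g μ}

/-- The standard basis `e₁, …, e₅` of `ℂ⁵` (zero-indexed: `e i` is `e_{i+1}`). -/
def e (i : Fin 5) : Vn 5 := Pi.single i 1

/-- Multiplication table of the algebra `𝐀21` (entry `(i, j)` is `eᵢ · eⱼ`). -/
def tblA21 : Fin 5 → Fin 5 → Vn 5 :=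
  ![![0, 0, 0, e 4, 0],
   ![0, 0, e 4, 0, 0],
   ![0, e 4, 0, 0, 0],
   ![e 4, 0, 0, 0, 0],
   ![0, 0, 0, 0, 0]]

/-- Multiplication table of the algebra `𝐀20` (entry `(i, j)` is `eᵢ · eⱼ`). -/
def tblA20 : Fin 5 → Fin 5 → Vn 5 :=
  ![![e 2, e 3, 0, 0, 0],
   ![e 3, 0, 0, 0, 0],
   ![0, 0, 0, 0, 0],
   ![0, 0, 0, 0, 0],
   ![0, 0, 0, 0, 0]]

/-! Every product in `𝐀21` is a multiple of `e₅`, so any two products `ν x y`, `ν z w` of an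
algebra in the orbit are proportional, i.e. all `2 × 2` minors of the pair of coordinate
vectors vanish. These are polynomial equations in the structure constants, hence they persist in
the orbit closure. In `𝐀20` the products `e₁² = e₃` and `e₁e₂ = e₄` are not proportional. -/

def HasCollinearProducts {n : ℕ} (ν : Bil n) : Prop :=
  ∀ (x y z w : Vn n) (i j : Fin n), ν x y i * ν z w j = ν x y j * ν z w i

lemma isClosed_setOf_hasCollinearProducts (n : ℕ) :
    IsClosed {ν : Bil n | HasCollinearProducts ν} := by
  simp only [HasCollinearProducts, Set.ofPred_forall]
  refine isClosed_iInter fun x => isClosed_iInter fun y => isClosed_iInter fun z =>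
    isClosed_iInter fun w => isClosed_iInter fun i => isClosed_iInter fun j => ?_
  exact isClosed_eq (by fun_prop) (by fun_prop)

lemma hasCollinearProducts_of_forall_eq_smul {n : ℕ} {ν : Bil n} (v : Vn n)
    (h : ∀ x y, ∃ c : ℂ, ν x y = c • v) : HasCollinearProducts ν := by
  intro x y z w i j
  obtain ⟨c, hc⟩ := h x y
  obtain ⟨d, hd⟩ := h z w
  simp only [hc, hd, Pi.smul_apply, smul_eq_mul]
  ring

lemma closure_orbit_subset_setOf_hasCollinearProducts {n : ℕ} {μ : Bil n} (v : Vn n)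
    (h : ∀ x y, ∃ c : ℂ, μ x y = c • v) :
    closure (orbit μ) ⊆ {ν | HasCollinearProducts ν} := by
  refine closure_minimal ?_ (isClosed_setOf_hasCollinearProducts n)
  rintro ν ⟨g, rfl⟩
  refine hasCollinearProducts_of_forall_eq_smul (g v) fun x y => ?_
  obtain ⟨c, hc⟩ := h (g.symm x) (g.symm y)
  exact ⟨c, by rw [act_apply, hc, map_smul]⟩

lemma A21_apply {μ : Bil 5} (hμ : ∀ i j : Fin 5, μ (e i) (e j) = tblA21 i j) (a b : Vn 5) :
    μ a b = (a 0 * b 3 + a 1 * b 2 + a 2 * b 1 + a 3 * b 0) • e 4 := by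
  have hexpand (c : Vn 5) : c = ∑ i, c i • e i := pi_eq_sum_univ' c
  rw [hexpand a, hexpand b]
  simp only [map_sum, map_smul, sum_apply, smul_apply, hμ]
  funext k
  fin_cases k <;> simp [tblA21, Fin.sum_univ_five, e]
  ring

lemma not_hasCollinearProducts_A20 {lam : Bil 5}
    (hlam : ∀ i j : Fin 5, lam (e i) (e j) = tblA20 i j) : ¬ HasCollinearProducts lam := by
  intro h
  have := h (e 0) (e 0) (e 0) (e 1) 2 3
  rw [hlam, hlam] at this
  simp [tblA20, e] at this

/-- The $5$-dimensional nilpotent commutative associative algebra `𝐀21` does not degenerate to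
`𝐀20`: the structure `λ` of `𝐀20` does NOT lie in the closure of
the `GL(5, ℂ)`-orbit `O(μ)` of the structure `μ` of `𝐀21`. -/
theorem A21_not_deg_A20 (μ lam : Bil 5)
    (hμ : ∀ i j : Fin 5, μ (e i) (e j) = tblA21 i j)
    (hlam : ∀ i j : Fin 5, lam (e i) (e j) = tblA20 i j) :
    lam ∉ closure (orbit μ) := fun hmem =>
  not_hasCollinearProducts_A20 hlam <|
    closure_orbit_subset_setOf_hasCollinearProducts (e 4) (fun x y => ⟨_, A21_apply hμ x y⟩) hmem
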